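/- arXiv:math/0305137 — 6 statements merged into one kernel-verified Lean document; each statement's English description precedes it below -/
import Mathlib

section
/- Let R be a commutative Noetherian ring of prime characteristic p, and let a be an ideal of R. Then the sequence of tight closures of the Frobenius powers, ((a^{[p^n]})^*)_{n∈ℕ}, is an f-sequence: f^{-1}((a^{[p^{n+1}]})^*) = (a^{[p^n]})^* for all n. -/
/-- The ideal `b^{[p^n]}` generated by `p^n`-th powers of elements of `b`. -/
def FrobPow {R : Type*} [CommRing R] (p n : ℕ) (b : Ideal R) : Ideal R :=
  Ideal.span ((fun x => x ^ p ^ n) '' (b : Set R))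

/-- `R°`: the complement of the union of the minimal primes of `R`. -/
def RingCirc (R : Type*) [CommRing R] : Set R := {c | ∀ P ∈ minimalPrimes R, c ∉ P}

/-- The tight closure of an ideal `b`. -/
def TightClosure {R : Type*} [CommRing R] (p : ℕ) (b : Ideal R) : Set R :=
  {r | ∃ c ∈ RingCirc R, ∃ N : ℕ, ∀ n ≥ N, c * r ^ p ^ n ∈ FrobPow p n b}

/-!
Since Frobenius is a ring map, `(b^{[p^k]})^{[p^m]} = b^{[p^{m+k}]}`. Hence `r ∈ (a^{[p^n]})^*` says
that `c r^{p^m} ∈ a^{[p^{m+n}]}` for large `m`, while `r^p ∈ (a^{[p^{n+1}]})^*` says that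
`c r^{p^{m+1}} ∈ a^{[p^{(m+1)+n}]}` for large `m`: the same condition, shifted by one.
-/

open Filter

theorem Filter.eventually_atTop_succ_iff {P : ℕ → Prop} :
    (∀ᶠ m in atTop, P (m + 1)) ↔ ∀ᶠ m in atTop, P m := by
  conv_rhs => rw [← map_add_atTop_eq_nat 1]
  rfl

section

variable {R : Type*} [CommRing R] {p : ℕ}

theorem mem_tightClosure_iff_eventually {b : Ideal R} {r : R} :
    r ∈ TightClosure p b ↔ ∃ c ∈ RingCirc R, ∀ᶠ n in atTop, c * r ^ p ^ n ∈ FrobPow p n b := by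
  simp only [TightClosure, Set.mem_ofPred_eq, eventually_atTop]

variable [ExpChar R p]

theorem frobPow_eq_map_iterateFrobenius (n : ℕ) (b : Ideal R) :
    FrobPow p n b = b.map (iterateFrobenius R p n) :=
  rfl

theorem frobPow_frobPow (m k : ℕ) (b : Ideal R) :
    FrobPow p m (FrobPow p k b) = FrobPow p (m + k) b := by
  simp only [frobPow_eq_map_iterateFrobenius, Ideal.map_map, iterateFrobenius_add]

theorem mem_tightClosure_frobPow_iff {k : ℕ} {b : Ideal R} {r : R} :
    r ∈ TightClosure p (FrobPow p k b) ↔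
      ∃ c ∈ RingCirc R, ∀ᶠ n in atTop, c * r ^ p ^ n ∈ FrobPow p (n + k) b := by
  simp only [mem_tightClosure_iff_eventually, frobPow_frobPow]

end

theorem tightClosure_frobeniusPowers_fSequence_general {R : Type*} [CommRing R]
    (p : ℕ) (hp : p.Prime) [CharP R p] (a : Ideal R) :
    ∀ (n : ℕ) (r : R),
      r ∈ TightClosure p (FrobPow p n a) ↔ r ^ p ∈ TightClosure p (FrobPow p (n + 1) a) := by
  have : ExpChar R p := ExpChar.prime hp
  intro n r
  have hpow (m : ℕ) : (r ^ p) ^ p ^ m = r ^ p ^ (m + 1) := by rw [← pow_mul, pow_succ']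
  simp only [mem_tightClosure_frobPow_iff, hpow, add_comm n 1, ← add_assoc]
  exact exists_congr fun _ => and_congr_right fun _ => eventually_atTop_succ_iff.symm

theorem tightClosure_frobeniusPowers_fSequence {R : Type*} [CommRing R] [IsNoetherianRing R]
    (p : ℕ) (hp : p.Prime) [CharP R p] (a : Ideal R) :
    ∀ (n : ℕ) (r : R),
      r ∈ TightClosure p (FrobPow p n a) ↔ r ^ p ∈ TightClosure p (FrobPow p (n + 1) a) :=
  tightClosure_frobeniusPowers_fSequence_general p hp a
end

section
/- Let R be a commutative Noetherian ring of prime characteristic p and let (a_n) be an f-sequence of ideals of R. Then for every n, the set of associated primes of a_n is contained in the set of associated primes of a_{n+1}. -/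
/-!
The defining property of an f-sequence, `z r ∈ aₙ ↔ zᵖ rᵖ ∈ aₙ₊₁`, gives
`(aₙ₊₁ : rᵖ) ⊆ (aₙ : r) ⊆ √(aₙ₊₁ : rᵖ)`, so `(aₙ : r)` and `(aₙ₊₁ : rᵖ)` have the same radical.
Associated primes of `R ⧸ I` in Mathlib's sense are the primes of the form `√(I : r)`
(for Noetherian `R` these are the primes of the form `(I : r)`), so every associated prime
`√(aₙ : r)` of `R ⧸ aₙ` is the associated prime `√(aₙ₊₁ : rᵖ)` of `R ⧸ aₙ₊₁`.
-/

namespace Ideal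

variable {R : Type*} [CommRing R]

theorem colon_bot_singleton_quotient_mk (I : Ideal R) (x : R) :
    (⊥ : Submodule R (R ⧸ I)).colon {Quotient.mk I x} = I.colon {x} := by
  ext y
  rw [Submodule.mem_colon_singleton, Submodule.mem_colon_singleton, Submodule.mem_bot,
    Algebra.smul_def, Quotient.algebraMap_eq, ← map_mul, Quotient.eq_zero_iff_mem, smul_eq_mul]

theorem mem_associatedPrimes_quotient_iff {I P : Ideal R} :
    P ∈ associatedPrimes R (R ⧸ I) ↔ P.IsPrime ∧ ∃ x : R, P = (I.colon {x}).radical := by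
  rw [AssociatedPrimes.mem_iff, IsAssociatedPrime, Submodule.isAssociatedPrime_def,
    Quotient.mk_surjective.exists]
  simp only [colon_bot_singleton_quotient_mk]

section

variable {p : ℕ} {I J : Ideal R}

theorem colon_pow_le_colon (hp : p ≠ 0) (hIJ : ∀ r, r ∈ I ↔ r ^ p ∈ J) (x : R) :
    J.colon {x ^ p} ≤ I.colon {x} := by
  intro z hz
  rw [Submodule.mem_colon_singleton, smul_eq_mul] at hz ⊢
  obtain ⟨q, rfl⟩ := Nat.exists_eq_succ_of_ne_zero hp
  rw [hIJ, mul_pow, pow_succ, mul_assoc]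
  exact J.mul_mem_left _ hz

theorem colon_le_radical_colon_pow (hIJ : ∀ r, r ∈ I ↔ r ^ p ∈ J) (x : R) :
    I.colon {x} ≤ (J.colon {x ^ p}).radical := by
  intro z hz
  rw [Submodule.mem_colon_singleton, smul_eq_mul, hIJ, mul_pow] at hz
  exact ⟨p, Submodule.mem_colon_singleton.mpr hz⟩

theorem radical_colon_pow_eq (hp : p ≠ 0) (hIJ : ∀ r, r ∈ I ↔ r ^ p ∈ J) (x : R) :
    (J.colon {x ^ p}).radical = (I.colon {x}).radical :=
  le_antisymm (radical_mono (colon_pow_le_colon hp hIJ x))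
    (radical_le_radical_iff.mpr (colon_le_radical_colon_pow hIJ x))

theorem associatedPrimes_quotient_subset_of_mem_iff_pow_mem (hp : p ≠ 0)
    (hIJ : ∀ r, r ∈ I ↔ r ^ p ∈ J) :
    associatedPrimes R (R ⧸ I) ⊆ associatedPrimes R (R ⧸ J) := by
  intro P hP
  obtain ⟨hPrime, x, rfl⟩ := mem_associatedPrimes_quotient_iff.mp hP
  exact mem_associatedPrimes_quotient_iff.mpr ⟨hPrime, x ^ p, (radical_colon_pow_eq hp hIJ x).symm⟩

end

end Ideal

theorem fSequence_associatedPrimes_mono_general {R : Type*} [CommRing R]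
    (p : ℕ) (hp : p.Prime) (a : ℕ → Ideal R)
    (hf : ∀ (n : ℕ) (r : R), r ∈ a n ↔ r ^ p ∈ a (n + 1)) :
    ∀ n : ℕ, associatedPrimes R (R ⧸ a n) ⊆ associatedPrimes R (R ⧸ a (n + 1)) :=
  fun n => Ideal.associatedPrimes_quotient_subset_of_mem_iff_pow_mem hp.ne_zero (hf n)

theorem fSequence_associatedPrimes_mono {R : Type*} [CommRing R] [IsNoetherianRing R]
    (p : ℕ) (hp : p.Prime) [CharP R p] (a : ℕ → Ideal R)
    (hf : ∀ (n : ℕ) (r : R), r ∈ a n ↔ r ^ p ∈ a (n + 1)) :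
    ∀ n : ℕ, associatedPrimes R (R ⧸ a n) ⊆ associatedPrimes R (R ⧸ a (n + 1)) :=
  fSequence_associatedPrimes_mono_general p hp a hf
end

section
/- Let R be a commutative ring of prime characteristic p, let a be an F-closed ideal of R, and let S be a multiplicatively closed subset of R. Then the extension a·S^{-1}R is an F-closed ideal of the localization S^{-1}R. -/
/-!
Write `q = p ^ n` and `y = r / t`. If `y ^ q` lies in `a^{[q]} S⁻¹R`, then so does `r ^ q / t ^ q`,
so `m r ^ q ∈ a^{[q]}` for some `m ∈ S`, hence `(m r) ^ q = m ^ (q - 1) (m r ^ q) ∈ a^{[q]}`.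
F-closedness of `a` gives `m r ∈ a`, and `y = m r / m t ∈ a S⁻¹R`. The first step uses
`(a S⁻¹R)^{[q]} ⊆ a^{[q]} S⁻¹R`, which holds because every element of `a S⁻¹R` is a single
fraction `x / s` with `x ∈ a`.
-/

def IsFClosed {R : Type*} [CommRing R] (p : ℕ) (a : Ideal R) : Prop :=
  ∀ (r : R) (n : ℕ), r ^ p ^ n ∈ FrobPow p n a → r ∈ a

theorem pow_mem_FrobPow {R : Type*} [CommRing R] (p n : ℕ) {b : Ideal R} {x : R} (hx : x ∈ b) :
    x ^ p ^ n ∈ FrobPow p n b :=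
  Ideal.subset_span ⟨x, hx, rfl⟩

section Localization

variable {R : Type*} [CommRing R] {L : Type*} [CommRing L] [Algebra R L]

theorem FrobPow_map_le_map_FrobPow (S : Submonoid R) [IsLocalization S L] (p n : ℕ)
    (a : Ideal R) :
    FrobPow p n (a.map (algebraMap R L)) ≤ (FrobPow p n a).map (algebraMap R L) := by
  refine Ideal.span_le.mpr ?_
  rintro _ ⟨y, hy, rfl⟩
  obtain ⟨⟨x, s⟩, rfl⟩ := IsLocalization.mk'_surjective S y
  dsimp only at hy ⊢
  obtain ⟨m, hmS, hmx⟩ := (IsLocalization.mk'_mem_map_algebraMap_iff S L a x s).mp hy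
  rw [SetLike.mem_coe, ← IsLocalization.mk'_pow, IsLocalization.mk'_mem_map_algebraMap_iff]
  exact ⟨m ^ p ^ n, pow_mem hmS _, mul_pow m x _ ▸ pow_mem_FrobPow p n hmx⟩

theorem IsFClosed.map_algebraMap (S : Submonoid R) [IsLocalization S L] {p : ℕ} (hp : 0 < p)
    {a : Ideal R} (ha : IsFClosed p a) :
    IsFClosed p (a.map (algebraMap R L)) := by
  intro y n hy
  obtain ⟨⟨r, t⟩, rfl⟩ := IsLocalization.mk'_surjective S y
  dsimp only at hy ⊢
  replace hy := FrobPow_map_le_map_FrobPow S p n a hy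
  rw [← IsLocalization.mk'_pow, IsLocalization.mk'_mem_map_algebraMap_iff] at hy
  obtain ⟨m, hmS, hmr⟩ := hy
  have hmr_pow : (m * r) ^ p ^ n ∈ FrobPow p n a := by
    have hq : (m * r) ^ p ^ n = m ^ (p ^ n - 1) * (m * r ^ p ^ n) := by
      rw [mul_pow, ← mul_assoc, ← pow_succ, Nat.sub_add_cancel (pow_pos hp n)]
    rw [hq]
    exact Ideal.mul_mem_left _ _ hmr
  exact (IsLocalization.mk'_mem_map_algebraMap_iff S L a r t).mpr ⟨m, hmS, ha _ n hmr_pow⟩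

end Localization

theorem fClosed_localization_general {R : Type*} [CommRing R]
    (p : ℕ) (hp : p.Prime) (a : Ideal R) (S : Submonoid R)
    (ha : ∀ (r : R) (n : ℕ), r ^ p ^ n ∈ FrobPow p n a → r ∈ a) :
    ∀ (y : Localization S) (n : ℕ),
      y ^ p ^ n ∈ FrobPow p n (Ideal.map (algebraMap R (Localization S)) a) →
        y ∈ Ideal.map (algebraMap R (Localization S)) a :=
  IsFClosed.map_algebraMap S hp.pos ha

theorem fClosed_localization {R : Type*} [CommRing R]
    (p : ℕ) (hp : p.Prime) [CharP R p] (a : Ideal R) (S : Submonoid R)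
    (ha : ∀ (r : R) (n : ℕ), r ^ p ^ n ∈ FrobPow p n a → r ∈ a) :
    ∀ (y : Localization S) (n : ℕ),
      y ^ p ^ n ∈ FrobPow p n (Ideal.map (algebraMap R (Localization S)) a) →
        y ∈ Ideal.map (algebraMap R (Localization S)) a :=
  fClosed_localization_general p hp a S ha
end

section
/- Let η : R → R' be a homomorphism of commutative Noetherian rings of prime characteristic p, let m₀ ∈ ℕ, and let c ∈ R° be a p^{m₀}-weak test element for R such that η(c) is a p^{m₀}-weak test element for R'. If a' is a tightly closed ideal of R', then η^{-1}(a') is a tightly closed ideal of R. -/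
/-- `c` is a `p^{m₀}`-weak test element. -/
def IsWeakTestElement {R : Type*} [CommRing R] (p m₀ : ℕ) (c : R) : Prop :=
  c ∈ RingCirc R ∧
    ∀ (b : Ideal R) (r : R), r ∈ TightClosure p b ↔ ∀ n ≥ m₀, c * r ^ p ^ n ∈ FrobPow p n b

section

variable {R R' : Type*} [CommRing R] [CommRing R']

lemma one_mem_ringCirc : (1 : R) ∈ RingCirc R :=
  fun _ hP => (Ideal.IsMinimalPrime.isPrime hP).ne_top ∘ (Ideal.eq_top_of_isUnit_mem _ · isUnit_one)

lemma pow_mem_frobPow (p n : ℕ) {b : Ideal R} {r : R} (hr : r ∈ b) : r ^ p ^ n ∈ FrobPow p n b :=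
  Ideal.subset_span ⟨r, hr, rfl⟩

lemma le_tightClosure (p : ℕ) (b : Ideal R) : (b : Set R) ⊆ TightClosure p b :=
  fun r hr => ⟨1, one_mem_ringCirc, 0, fun n _ => by
    simpa only [one_mul] using pow_mem_frobPow p n hr⟩

lemma frobPow_comap_le (η : R →+* R') (p n : ℕ) (a' : Ideal R') :
    FrobPow p n (Ideal.comap η a') ≤ Ideal.comap η (FrobPow p n a') := by
  refine Ideal.span_le.2 ?_
  rintro _ ⟨y, hy, rfl⟩
  simpa only [SetLike.mem_coe, Ideal.mem_comap, map_pow] using pow_mem_frobPow p n (b := a') hy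

/-- An arbitrary witness `d ∈ R°` need not map into `R'°`; the test element replaces it by `c`,
whose image lies in `R'°` by hypothesis. -/
lemma map_mem_tightClosure_of_mem_tightClosure_comap {p m₀ : ℕ} {c : R}
    (hc : IsWeakTestElement p m₀ c) (η : R →+* R') (hηc : η c ∈ RingCirc R')
    {a' : Ideal R'} {r : R} (hr : r ∈ TightClosure p (Ideal.comap η a')) :
    η r ∈ TightClosure p a' := by
  refine ⟨η c, hηc, m₀, fun n hn => ?_⟩
  have := frobPow_comap_le η p n a' ((hc.2 _ r).1 hr n hn)
  rwa [Ideal.mem_comap, map_mul, map_pow] at this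

end

theorem tightlyClosed_comap_general {R R' : Type*} [CommRing R]
    [CommRing R'] (p : ℕ)
    (η : R →+* R') (m₀ : ℕ) (c : R)
    (hc : IsWeakTestElement p m₀ c) (hc' : IsWeakTestElement p m₀ (η c))
    (a' : Ideal R') (ha' : TightClosure p a' = (a' : Set R')) :
    TightClosure p (Ideal.comap η a') = ((Ideal.comap η a' : Ideal R) : Set R) := by
  refine Set.Subset.antisymm (fun r hr => ?_) (le_tightClosure p _)
  have := map_mem_tightClosure_of_mem_tightClosure_comap hc η hc'.1 hr
  rwa [ha'] at this

theorem tightlyClosed_comap {R R' : Type*} [CommRing R] [IsNoetherianRing R]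
    [CommRing R'] [IsNoetherianRing R'] (p : ℕ) (hp : p.Prime) [CharP R p] [CharP R' p]
    (η : R →+* R') (m₀ : ℕ) (c : R)
    (hc : IsWeakTestElement p m₀ c) (hc' : IsWeakTestElement p m₀ (η c))
    (a' : Ideal R') (ha' : TightClosure p a' = (a' : Set R')) :
    TightClosure p (Ideal.comap η a') = ((Ideal.comap η a' : Ideal R) : Set R) :=
  tightlyClosed_comap_general p η m₀ c hc hc' a' ha'
end

section
/- Let R be a commutative Noetherian ring of prime characteristic p, let p be a prime ideal of R, and let (q_n)_{n∈ℕ} be an f-sequence of p-primary ideals of R. If h ∈ ℕ is such that p^h ⊆ q_0, then p^{[p^n]·h} ⊆ q_n for all n ∈ ℕ (here p^{[p^n]·h} means the h-th ordinary power of the Frobenius power p^{[p^n]}). -/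
theorem FrobPow_zero {R : Type*} [CommRing R] (p : ℕ) (b : Ideal R) : FrobPow p 0 b = b := by
  simp [FrobPow]

theorem FrobPow_succ {R : Type*} [CommRing R] (p n : ℕ) (b : Ideal R) :
    FrobPow p (n + 1) b = Ideal.span ((· ^ p) '' ((· ^ p ^ n) '' (b : Set R))) := by
  simp only [FrobPow, Set.image_image, ← pow_mul, pow_succ]

/-- A product of `k`-th powers is the `k`-th power of the product, so the generators of the
left side are `k`-th powers of elements of `I`. -/
theorem Ideal.span_image_pow_pow_le {R : Type*} [CommRing R] {s : Set R} {I J : Ideal R}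
    (k h : ℕ) (hsI : Ideal.span s ^ h ≤ I) (hIJ : ∀ r ∈ I, r ^ k ∈ J) :
    Ideal.span ((· ^ k) '' s) ^ h ≤ J := by
  have himage : (· ^ k) '' s = powMonoidHom k '' s := rfl
  rw [Ideal.span, Submodule.span_pow, himage, ← Set.image_pow, Submodule.span_le]
  rintro _ ⟨x, hx, rfl⟩
  refine hIJ x (hsI ?_)
  rw [Ideal.span, Submodule.span_pow]
  exact Submodule.subset_span hx

theorem primary_fSequence_linear_growth_general {R : Type*} [CommRing R]
    (p : ℕ) (P : Ideal R)
    (q : ℕ → Ideal R)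
    (hfs : ∀ (n : ℕ) (r : R), r ∈ q n ↔ r ^ p ∈ q (n + 1))
    (h : ℕ) (hh : P ^ h ≤ q 0) :
    ∀ n : ℕ, (FrobPow p n P) ^ h ≤ q n := by
  intro n
  induction n with
  | zero => rwa [FrobPow_zero]
  | succ n ih =>
    rw [FrobPow_succ]
    exact Ideal.span_image_pow_pow_le p h ih fun r hr => (hfs n r).1 hr

theorem primary_fSequence_linear_growth {R : Type*} [CommRing R] [IsNoetherianRing R]
    (p : ℕ) (hp : p.Prime) [CharP R p] (P : Ideal R) (hP : P.IsPrime)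
    (q : ℕ → Ideal R)
    (hfs : ∀ (n : ℕ) (r : R), r ∈ q n ↔ r ^ p ∈ q (n + 1))
    (hprim : ∀ n : ℕ, (q n).IsPrimary ∧ (q n).radical = P)
    (h : ℕ) (hh : P ^ h ≤ q 0) :
    ∀ n : ℕ, (FrobPow p n P) ^ h ≤ q n :=
  primary_fSequence_linear_growth_general p P q hfs h hh
end

section
/- Let R be a commutative Noetherian domain of prime characteristic p whose absolute integral closure R^+ is flat over R. Let q be a p-primary ideal of R, identify the perfect closure R^∞ with {σ ∈ R^+ : σ^{p^n} ∈ R for some n}, and let P = {σ ∈ R^∞ : σ^{p^n} ∈ p for some n} be the prime of R^∞ corresponding to p. Then q·R^+ ∩ R^∞ is a P-primary ideal of R^∞. -/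
/-!
Since `R⁺` is a domain, integral and flat over `R`, it is faithfully flat, so `q R⁺ ∩ R = q`.
For `b ∈ R^∞` with `b ^ p ^ n = s ∈ R`, the element `s` acts injectively on `R ⧸ q` as soon as
`s ∉ √q`, and by flatness it still acts injectively on `R⁺ ⧸ q R⁺ = R⁺ ⊗ R ⧸ q`; hence
`a b ∈ q R⁺` forces `a ∈ q R⁺`. The radical is computed by pulling `(σ ^ k) ^ p ^ n ∈ q R⁺` back
to `R` along the contraction identity.
-/

open TensorProduct

namespace Ideal

variable {R B : Type*} [CommRing R] [CommRing B] [Algebra R B] {q : Ideal R}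

theorem IsPrimary.isSMulRegular_quotient (hq : q.IsPrimary) {s : R} (hs : s ∉ q.radical) :
    IsSMulRegular (R ⧸ q) s :=
  (isSMulRegular_quotient_iff_mem_of_smul_mem _ _).mpr fun x hx =>
    ((isPrimary_iff.mp hq).2 (by rwa [smul_eq_mul, mul_comm] at hx)).resolve_right hs

theorem mem_map_of_algebraMap_mul_mem_map [Module.Flat R B] {s : R}
    (hs : IsSMulRegular (R ⧸ q) s) {x : B} (hx : algebraMap R B s * x ∈ q.map (algebraMap R B)) :
    x ∈ q.map (algebraMap R B) := by
  have hreg : IsSMulRegular (B ⧸ (q • ⊤ : Submodule R B)) s :=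
    ((tensorQuotEquivQuotSMul B q).isSMulRegular_congr s).mp (hs.lTensor B)
  rw [← Algebra.smul_def, ← Submodule.restrictScalars_mem R, ← smul_top_eq_map] at hx
  have hx' := mem_of_isSMulRegular_quotient_of_smul_mem hreg hx
  rwa [smul_top_eq_map, Submodule.restrictScalars_mem] at hx'

theorem IsPrimary.mem_map_or_mem_radical_of_mul_mem_map [Module.Flat R B] (hq : q.IsPrimary)
    {a b : B} {n : ℕ} (hn : n ≠ 0) {s : R} (hb : b ^ n = algebraMap R B s)
    (hab : a * b ∈ q.map (algebraMap R B)) : a ∈ q.map (algebraMap R B) ∨ s ∈ q.radical := by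
  refine or_iff_not_imp_right.mpr fun hs =>
    mem_map_of_algebraMap_mul_mem_map (hq.isSMulRegular_quotient hs) ?_
  obtain ⟨m, rfl⟩ := Nat.exists_eq_succ_of_ne_zero hn
  have hfactor : b ^ (m + 1) * a = a * b * b ^ m := by ring
  rw [← hb, hfactor]
  exact mul_mem_right _ _ hab

theorem map_ne_top_of_faithfullyFlat [Module.FaithfullyFlat R B] (hq : q ≠ ⊤) :
    q.map (algebraMap R B) ≠ ⊤ := fun h =>
  hq (by rw [← comap_map_eq_self_of_faithfullyFlat (B := B) q, h, comap_top])

theorem mem_radical_of_pow_mem_map [Module.FaithfullyFlat R B] {σ : B} {m k : ℕ} (hm : m ≠ 0)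
    {t : R} (ht : σ ^ m = algebraMap R B t) (hk : σ ^ k ∈ q.map (algebraMap R B)) :
    t ∈ q.radical := by
  refine ⟨k, ?_⟩
  rw [← comap_map_eq_self_of_faithfullyFlat (B := B) q, mem_comap, map_pow, ← ht, ← pow_mul,
    mul_comm, pow_mul]
  exact pow_mem_of_mem _ hk _ (Nat.pos_of_ne_zero hm)

theorem exists_pow_mem_map_of_mem_radical {σ : B} {m : ℕ} (hm : m ≠ 0) {t : R}
    (ht : σ ^ m = algebraMap R B t) (htq : t ∈ q.radical) :
    ∃ k, 0 < k ∧ σ ^ k ∈ q.map (algebraMap R B) := by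
  obtain ⟨j, hj⟩ := htq
  refine ⟨m * (j + 1), by positivity, ?_⟩
  rw [pow_mul, ht, ← map_pow]
  exact mem_map_of_mem _ (pow_succ t j ▸ mul_mem_right _ _ hj)

end Ideal

theorem faithfulSMul_integralClosure_algebraicClosure (R : Type*) [CommRing R] [IsDomain R] :
    FaithfulSMul R (integralClosure R (AlgebraicClosure (FractionRing R))) :=
  have : FaithfulSMul R (AlgebraicClosure (FractionRing R)) := .trans R (FractionRing R) _
  .tower_bot R _ (AlgebraicClosure (FractionRing R))

theorem plus_closure_primary_in_perfect_closure_general {R : Type*} [CommRing R] [IsDomain R]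
    (p : ℕ) (hp : p.Prime) [CharP R p]
    (Rplus : Subalgebra R (AlgebraicClosure (FractionRing R)))
    (hRplus : Rplus = integralClosure R (AlgebraicClosure (FractionRing R)))
    (hflat : Module.Flat R Rplus)
    (q P' : Ideal R) (hq : q.IsPrimary) (hqrad : q.radical = P')
    (Rinf Q P : Set Rplus)
    (hRinf : Rinf = {σ | ∃ n : ℕ, σ ^ p ^ n ∈ Set.range (algebraMap R Rplus)})
    (hQ : Q = ↑(Ideal.map (algebraMap R Rplus) q) ∩ Rinf)
    (hPdef : P = {σ | σ ∈ Rinf ∧ ∃ n : ℕ, σ ^ p ^ n ∈ (algebraMap R Rplus) '' P'}) :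
    Q ≠ Rinf ∧
      (∀ a b, a ∈ Q → b ∈ Q → a + b ∈ Q) ∧
      (∀ a ∈ Rinf, ∀ b ∈ Q, a * b ∈ Q) ∧
      (∀ a b, a ∈ Rinf → b ∈ Rinf → a * b ∈ Q → a ∈ Q ∨ b ∈ P) ∧
      {σ | σ ∈ Rinf ∧ ∃ k : ℕ, 0 < k ∧ σ ^ k ∈ Q} = P := by
  subst hRplus
  have := Fact.mk hp
  have := faithfulSMul_integralClosure_algebraicClosure R
  have := ExpChar.of_injective_algebraMap' R
    (A := integralClosure R (AlgebraicClosure (FractionRing R))) p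
  have hpow (n : ℕ) : p ^ n ≠ 0 := pow_ne_zero n hp.ne_zero
  replace hRinf : Rinf = (Subalgebra.perfectClosure R
      (integralClosure R (AlgebraicClosure (FractionRing R))) p : Set _) := hRinf
  subst hRinf hQ hPdef hqrad
  refine ⟨?_, ?_, ?_, ?_, ?_⟩
  · intro h
    have hone := h.symm.subset (one_mem (Subalgebra.perfectClosure R _ p))
    exact Ideal.map_ne_top_of_faithfullyFlat hq.ne_top ((Ideal.eq_top_iff_one _).mpr hone.1)
  · exact fun a b ha hb => ⟨add_mem ha.1 hb.1, add_mem ha.2 hb.2⟩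
  · exact fun a ha b hb => ⟨Ideal.mul_mem_left _ a hb.1, mul_mem ha hb.2⟩
  · rintro a b ha hb ⟨hab, -⟩
    obtain ⟨n, s, hs⟩ := id hb
    exact (hq.mem_map_or_mem_radical_of_mul_mem_map (hpow n) hs.symm hab).imp
      (⟨·, ha⟩) fun hs' => ⟨hb, n, s, hs', hs⟩
  · ext σ
    constructor
    · rintro ⟨hσ, k, -, hk, -⟩
      obtain ⟨n, t, ht⟩ := id hσ
      exact ⟨hσ, n, t, Ideal.mem_radical_of_pow_mem_map (hpow n) ht.symm hk, ht⟩
    · rintro ⟨hσ, n, t, ht, hσt⟩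
      obtain ⟨k, hk, hσk⟩ := Ideal.exists_pow_mem_map_of_mem_radical (hpow n) hσt.symm ht
      exact ⟨hσ, k, hk, hσk, pow_mem hσ k⟩

theorem plus_closure_primary_in_perfect_closure {R : Type*} [CommRing R] [IsDomain R]
    [IsNoetherianRing R] (p : ℕ) (hp : p.Prime) [CharP R p]
    (Rplus : Subalgebra R (AlgebraicClosure (FractionRing R)))
    (hRplus : Rplus = integralClosure R (AlgebraicClosure (FractionRing R)))
    (hflat : Module.Flat R Rplus)
    (q P' : Ideal R) (hP' : P'.IsPrime) (hq : q.IsPrimary) (hqrad : q.radical = P')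
    (Rinf Q P : Set Rplus)
    (hRinf : Rinf = {σ | ∃ n : ℕ, σ ^ p ^ n ∈ Set.range (algebraMap R Rplus)})
    (hQ : Q = ↑(Ideal.map (algebraMap R Rplus) q) ∩ Rinf)
    (hPdef : P = {σ | σ ∈ Rinf ∧ ∃ n : ℕ, σ ^ p ^ n ∈ (algebraMap R Rplus) '' P'}) :
    Q ≠ Rinf ∧
      (∀ a b, a ∈ Q → b ∈ Q → a + b ∈ Q) ∧
      (∀ a ∈ Rinf, ∀ b ∈ Q, a * b ∈ Q) ∧
      (∀ a b, a ∈ Rinf → b ∈ Rinf → a * b ∈ Q → a ∈ Q ∨ b ∈ P) ∧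
      {σ | σ ∈ Rinf ∧ ∃ k : ℕ, 0 < k ∧ σ ^ k ∈ Q} = P :=
  plus_closure_primary_in_perfect_closure_general p hp Rplus hRplus hflat q P' hq hqrad Rinf Q P
    hRinf hQ hPdef
end
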